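/- arXiv:1703.02214 — 2 statements merged into one kernel-verified Lean document; each statement's English description precedes it below -/
import Mathlib

section
/- For every orthogonal 3×3 matrix Q (Q ∈ O(3)), every z ∈ ℝ³ and every real 3×3 matrix p, the Oseen–Frank density is rotation invariant: W(Qz, QpQᵀ) = W(z,p). -/
noncomputable section

open MeasureTheory Metric Filter Topology

abbrev E3 : Type := EuclideanSpace ℝ (Fin 3)
abbrev V3 : Type := Fin 3 → ℝ
abbrev M3 : Type := Matrix (Fin 3) (Fin 3) ℝ

/-- trace of a 3×3 matrix -/
def trA (p : M3) : ℝ := ∑ i, p i i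

/-- curl vector: c(p)_i = Σ_{j,k} ε_{ijk} p^k_j -/
def curlv (p : M3) : V3 := ![p 2 1 - p 1 2, p 0 2 - p 2 0, p 1 0 - p 0 1]

def dot3 (a b : V3) : ℝ := ∑ i, a i * b i

def cross3 (a b : V3) : V3 :=
  ![a 1 * b 2 - a 2 * b 1, a 2 * b 0 - a 0 * b 2, a 0 * b 1 - a 1 * b 0]

def trSq (p : M3) : ℝ := ∑ i, ∑ j, p i j * p j i

def frobSq (p : M3) : ℝ := ∑ i, ∑ j, (p i j) ^ 2

def normSq3 (a : V3) : ℝ := ∑ i, (a i) ^ 2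

def eN (a : V3) : ℝ := Real.sqrt (normSq3 a)

def frobN (p : M3) : ℝ := Real.sqrt (frobSq p)

/-- Oseen–Frank density -/
def W (k1 k2 k3 k4 : ℝ) (z : V3) (p : M3) : ℝ :=
  k1 * (trA p) ^ 2 + k2 * (dot3 z (curlv p)) ^ 2 + k3 * normSq3 (cross3 z (curlv p))
    + (k2 + k4) * (trSq p - (trA p) ^ 2)

/-- W_{u^i} -/
def Wu (k1 k2 k3 k4 : ℝ) (z : V3) (p : M3) (i : Fin 3) : ℝ :=
  deriv (fun s : ℝ => W k1 k2 k3 k4 (z + s • (Pi.single i (1 : ℝ) : V3)) p) 0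

/-- W_{p^i_α} -/
def Wp (k1 k2 k3 k4 : ℝ) (z : V3) (p : M3) (i α : Fin 3) : ℝ :=
  deriv (fun s : ℝ => W k1 k2 k3 k4 z (p + s • Matrix.single i α (1 : ℝ))) 0

def Wuu (k1 k2 k3 k4 : ℝ) (z : V3) (p : M3) (i j : Fin 3) : ℝ :=
  deriv (fun s : ℝ => Wu k1 k2 k3 k4 (z + s • (Pi.single j (1 : ℝ) : V3)) p i) 0

def Wup (k1 k2 k3 k4 : ℝ) (z : V3) (p : M3) (i j β : Fin 3) : ℝ :=
  deriv (fun s : ℝ => Wu k1 k2 k3 k4 z (p + s • Matrix.single j β (1 : ℝ)) i) 0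

def Wpp (k1 k2 k3 k4 : ℝ) (z : V3) (p : M3) (i α j β : Fin 3) : ℝ :=
  deriv (fun s : ℝ => Wp k1 k2 k3 k4 z (p + s • Matrix.single j β (1 : ℝ)) i α) 0

def StrongLegendre (k1 k2 k3 k4 a : ℝ) : Prop :=
  ∀ z : V3, normSq3 z = 1 → ∀ q ξ : M3,
    a * frobSq ξ ≤ ∑ i, ∑ α, ∑ j, ∑ β, Wpp k1 k2 k3 k4 z q i α j β * ξ i α * ξ j β

/-- standard basis direction -/
def e3 (α : Fin 3) : E3 := EuclideanSpace.single α 1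

/-- partial derivative ∂_α f -/
def pd (f : E3 → ℝ) (α : Fin 3) (x : E3) : ℝ := fderiv ℝ f x (e3 α)

def lap (f : E3 → ℝ) (x : E3) : ℝ := ∑ α, pd (fun y => pd f α y) α x

/-- gradient matrix (∇u)^i_α = ∂_α u^i -/
def gradM (u : E3 → V3) (x : E3) : M3 := Matrix.of fun i α => pd (fun y => u y i) α x

/-- |∇w|² -/
def gradSqV (w : E3 → V3) (x : E3) : ℝ := frobSq (gradM w x)

/-- |∇²w|² -/
def hessSqV (w : E3 → V3) (x : E3) : ℝ :=
  ∑ i, ∑ α, ∑ β, (pd (fun y => pd (fun z => w z i) α y) β x) ^ 2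

/-- |∇³w|² -/
def d3SqV (w : E3 → V3) (x : E3) : ℝ :=
  ∑ i, ∑ α, ∑ β, ∑ γ,
    (pd (fun y => pd (fun z => pd (fun z' => w z' i) α z) β y) γ x) ^ 2

/-- |∇φ|² for scalar φ -/
def gradSqS (f : E3 → ℝ) (x : E3) : ℝ := ∑ α, (pd f α x) ^ 2

/-- |∇^k f|² (sum of squares of all k-th order partials) -/
def dkSq : ℕ → (E3 → ℝ) → E3 → ℝ
  | 0, f, x => (f x) ^ 2
  | (n + 1), f, x => ∑ α, dkSq n (fun y => pd f α y) x

/-- smooth solution of the Ericksen–Leslie system on ℝ³ × (0,T) -/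
def IsELSolution (k1 k2 k3 k4 : ℝ) (T : ℝ) (v u : ℝ → E3 → V3) (P : ℝ → E3 → ℝ) : Prop :=
  ContDiffOn ℝ (⊤ : ℕ∞) (fun q : ℝ × E3 => (v q.1 q.2, u q.1 q.2, P q.1 q.2))
    ((Set.Ioo 0 T) ×ˢ (Set.univ : Set E3)) ∧
  (∀ t ∈ Set.Ioo 0 T, ∀ x : E3, normSq3 (u t x) = 1) ∧
  (∀ t ∈ Set.Ioo 0 T, ∀ x : E3,
    (∀ i : Fin 3,
      deriv (fun s => v s x i) t + (∑ j, v t x j * pd (fun y => v t y i) j x)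
          + pd (fun y => P t y) i x
        = lap (fun y => v t y i) x
          - ∑ j, pd (fun y => ∑ k, pd (fun z => u t z k) i y
              * Wp k1 k2 k3 k4 (u t y) (gradM (u t) y) k j) j x) ∧
    (∑ j, pd (fun y => v t y j) j x = 0) ∧
    (∀ i : Fin 3,
      deriv (fun s => u s x i) t + (∑ j, v t x j * pd (fun y => u t y i) j x)
        = (∑ α, pd (fun y => Wp k1 k2 k3 k4 (u t y) (gradM (u t) y) i α
              - ∑ k, u t y k * u t y i * Wp k1 k2 k3 k4 (u t y) (gradM (u t) y) k α) α x)
          - Wu k1 k2 k3 k4 (u t x) (gradM (u t) x) i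
          + (∑ k, Wu k1 k2 k3 k4 (u t x) (gradM (u t) x) k * u t x i * u t x k)
          + (∑ α, ∑ k, Wp k1 k2 k3 k4 (u t x) (gradM (u t) x) k α
              * pd (fun y => u t y k) α x * u t x i)
          + (∑ α, ∑ k, Wp k1 k2 k3 k4 (u t x) (gradM (u t) x) k α
              * u t x k * pd (fun y => u t y i) α x)))

/-- F^{ij} = ∂_i u^k W_{p^k_j}(u,∇u) + v^i v^j -/
def FijF (k1 k2 k3 k4 : ℝ) (v u : ℝ → E3 → V3) (t : ℝ) (i j : Fin 3) (x : E3) : ℝ :=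
  (∑ k, pd (fun y => u t y k) i x * Wp k1 k2 k3 k4 (u t x) (gradM (u t) x) k j)
    + v t x i * v t x j

/-- canonical-pressure condition -/
def CanonicalPressure (k1 k2 k3 k4 : ℝ) (T : ℝ) (v u : ℝ → E3 → V3) (P : ℝ → E3 → ℝ) : Prop :=
  ∀ t ∈ Set.Ioo 0 T,
    (∀ i j : Fin 3, MemLp (fun x => FijF k1 k2 k3 k4 v u t i j x) 2 (volume : Measure E3)) ∧
    MemLp (fun x => P t x) 2 (volume : Measure E3) ∧
    ∀ᵐ ξ : E3, VectorFourier.fourierIntegral Real.fourierChar volume (innerₗ E3) (fun x => (P t x : ℂ)) ξ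
      = ∑ i, ∑ j, (((ξ i * ξ j / (∑ l, (ξ l) ^ 2)) : ℝ) : ℂ)
          * VectorFourier.fourierIntegral Real.fourierChar volume (innerₗ E3) (fun x => (FijF k1 k2 k3 k4 v u t i j x : ℂ)) ξ

/-- local uniform L³ norm: ‖g‖_{L³_R} -/
def l3loc (R : ℝ) (g : E3 → ℝ) : ℝ :=
  ⨆ x : E3, (∫ y in Metric.ball x R, |g y| ^ 3) ^ (3⁻¹ : ℝ)

def IsCutoff (φ : E3 → ℝ) : Prop := ContDiff ℝ (⊤ : ℕ∞) φ ∧ HasCompactSupport φ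

def WeakGradient (u0 : E3 → V3) (gu0 : E3 → M3) : Prop :=
  ∀ φ : E3 → ℝ, IsCutoff φ → ∀ i α : Fin 3,
    ∫ x : E3, u0 x i * pd φ α x = - ∫ x : E3, gu0 x i α * φ x

def WeakDivFree (v0 : E3 → V3) : Prop :=
  ∀ φ : E3 → ℝ, IsCutoff φ → ∫ x : E3, ∑ j, v0 x j * pd φ j x = 0


/-- rotation invariance of the Oseen–Frank density:
W(Qz, QpQᵀ) = W(z,p) for Q ∈ O(3). -/
theorem oseen_frank_rotation_invariant (k1 k2 k3 k4 : ℝ)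
    (Q : M3) (hQ : Q * Q.transpose = 1) (hQ' : Q.transpose * Q = 1)
    (z : V3) (p : M3) :
    W k1 k2 k3 k4 (Q.mulVec z) (Q * p * Q.transpose) = W k1 k2 k3 k4 z p := by
  -- column orthonormality entries
  have g : ∀ a b, Q 0 a * Q 0 b + Q 1 a * Q 1 b + Q 2 a * Q 2 b = (1 : M3) a b := by
    intro a b
    have := congrFun (congrFun hQ' a) b
    simpa [Matrix.mul_apply, Fin.sum_univ_three, Matrix.transpose_apply] using this
  have g00 : Q 0 0 * Q 0 0 + Q 1 0 * Q 1 0 + Q 2 0 * Q 2 0 = 1 := by simpa using g 0 0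
  have g01 : Q 0 0 * Q 0 1 + Q 1 0 * Q 1 1 + Q 2 0 * Q 2 1 = 0 := by simpa using g 0 1
  have g02 : Q 0 0 * Q 0 2 + Q 1 0 * Q 1 2 + Q 2 0 * Q 2 2 = 0 := by simpa using g 0 2
  have g10 : Q 0 1 * Q 0 0 + Q 1 1 * Q 1 0 + Q 2 1 * Q 2 0 = 0 := by simpa using g 1 0
  have g11 : Q 0 1 * Q 0 1 + Q 1 1 * Q 1 1 + Q 2 1 * Q 2 1 = 1 := by simpa using g 1 1
  have g12 : Q 0 1 * Q 0 2 + Q 1 1 * Q 1 2 + Q 2 1 * Q 2 2 = 0 := by simpa using g 1 2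
  have g20 : Q 0 2 * Q 0 0 + Q 1 2 * Q 1 0 + Q 2 2 * Q 2 0 = 0 := by simpa using g 2 0
  have g21 : Q 0 2 * Q 0 1 + Q 1 2 * Q 1 1 + Q 2 2 * Q 2 1 = 0 := by simpa using g 2 1
  have g22 : Q 0 2 * Q 0 2 + Q 1 2 * Q 1 2 + Q 2 2 * Q 2 2 = 1 := by simpa using g 2 2
  -- determinant squared is one
  have hd : Q.det * Q.det = 1 := by
    have := congrArg Matrix.det hQ
    rwa [Matrix.det_mul, Matrix.det_transpose, Matrix.det_one] at this
  -- adjugate = det • Qᵀ, giving the cofactor relations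
  have hA : Q.adjugate = Q.det • Q.transpose := by
    calc Q.adjugate = (Q.transpose * Q) * Q.adjugate := by rw [hQ', one_mul]
    _ = Q.transpose * (Q * Q.adjugate) := by rw [Matrix.mul_assoc]
    _ = Q.transpose * (Q.det • 1) := by rw [Matrix.mul_adjugate]
    _ = Q.det • Q.transpose := by rw [Matrix.mul_smul, mul_one]
  have ha : ∀ a b, Q.adjugate b a = Q.det * Q a b := by
    intro a b; rw [hA]; simp [Matrix.smul_apply, Matrix.transpose_apply]
  have hadj := Matrix.adjugate_fin_three Q
  have r00 : Q 1 1 * Q 2 2 - Q 1 2 * Q 2 1 = Q.det * Q 0 0 := by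
    have := ha 0 0; rw [hadj] at this; simpa using this
  have r01 : -(Q 1 0 * Q 2 2) + Q 1 2 * Q 2 0 = Q.det * Q 0 1 := by
    have := ha 0 1; rw [hadj] at this; simpa using this
  have r02 : Q 1 0 * Q 2 1 - Q 1 1 * Q 2 0 = Q.det * Q 0 2 := by
    have := ha 0 2; rw [hadj] at this; simpa using this
  have r10 : -(Q 0 1 * Q 2 2) + Q 0 2 * Q 2 1 = Q.det * Q 1 0 := by
    have := ha 1 0; rw [hadj] at this; simpa using this
  have r11 : Q 0 0 * Q 2 2 - Q 0 2 * Q 2 0 = Q.det * Q 1 1 := by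
    have := ha 1 1; rw [hadj] at this; simpa using this
  have r12 : -(Q 0 0 * Q 2 1) + Q 0 1 * Q 2 0 = Q.det * Q 1 2 := by
    have := ha 1 2; rw [hadj] at this; simpa using this
  have r20 : Q 0 1 * Q 1 2 - Q 0 2 * Q 1 1 = Q.det * Q 2 0 := by
    have := ha 2 0; rw [hadj] at this; simpa using this
  have r21 : -(Q 0 0 * Q 1 2) + Q 0 2 * Q 1 0 = Q.det * Q 2 1 := by
    have := ha 2 1; rw [hadj] at this; simpa using this
  have r22 : Q 0 0 * Q 1 1 - Q 0 1 * Q 1 0 = Q.det * Q 2 2 := by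
    have := ha 2 2; rw [hadj] at this; simpa using this
  -- curl transforms with the determinant
  have hcurl0 : curlv (Q * p * Q.transpose) 0 = Q.det * (Q.mulVec (curlv p)) 0 := by
    simp only [curlv, Matrix.mulVec, Matrix.mul_apply, Matrix.transpose_apply,
      dotProduct, Fin.sum_univ_three, Matrix.cons_val_zero, Matrix.cons_val_one,
      Matrix.head_cons, Matrix.cons_val_two, Matrix.tail_cons]
    linear_combination (p 2 1 - p 1 2) * r00 + (p 0 2 - p 2 0) * r01 + (p 1 0 - p 0 1) * r02
  have hcurl1 : curlv (Q * p * Q.transpose) 1 = Q.det * (Q.mulVec (curlv p)) 1 := by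
    simp only [curlv, Matrix.mulVec, Matrix.mul_apply, Matrix.transpose_apply,
      dotProduct, Fin.sum_univ_three, Matrix.cons_val_zero, Matrix.cons_val_one,
      Matrix.head_cons, Matrix.cons_val_two, Matrix.tail_cons]
    linear_combination (p 2 1 - p 1 2) * r10 + (p 0 2 - p 2 0) * r11 + (p 1 0 - p 0 1) * r12
  have hcurl2 : curlv (Q * p * Q.transpose) 2 = Q.det * (Q.mulVec (curlv p)) 2 := by
    simp only [curlv, Matrix.mulVec, Matrix.mul_apply, Matrix.transpose_apply,
      dotProduct, Fin.sum_univ_three, Matrix.cons_val_zero, Matrix.cons_val_one,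
      Matrix.head_cons, Matrix.cons_val_two, Matrix.tail_cons]
    linear_combination (p 2 1 - p 1 2) * r20 + (p 0 2 - p 2 0) * r21 + (p 1 0 - p 0 1) * r22
  have hcurl : ∀ i, curlv (Q * p * Q.transpose) i = Q.det * (Q.mulVec (curlv p)) i := by
    intro i
    fin_cases i
    · exact hcurl0
    · exact hcurl1
    · exact hcurl2
  have hc : curlv (Q * p * Q.transpose) = fun i => Q.det * (Q.mulVec (curlv p)) i :=
    funext hcurl
  -- invariance of the dot product
  have hdot : ∀ a b : V3, dot3 (Q.mulVec a) (Q.mulVec b) = dot3 a b := by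
    intro a b
    simp only [dot3, Matrix.mulVec, dotProduct, Fin.sum_univ_three]
    linear_combination a 0 * b 0 * g00 + a 0 * b 1 * g01 + a 0 * b 2 * g02
      + a 1 * b 0 * g10 + a 1 * b 1 * g11 + a 1 * b 2 * g12
      + a 2 * b 0 * g20 + a 2 * b 1 * g21 + a 2 * b 2 * g22
  have hns : ∀ x : V3, normSq3 x = dot3 x x := by
    intro x; simp [normSq3, dot3, pow_two]
  -- trace invariances
  have htr : trA (Q * p * Q.transpose) = trA p := by
    have h1 : ∀ m : M3, trA m = Matrix.trace m := by
      intro m; simp [trA, Matrix.trace, Matrix.diag]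
    rw [h1, h1, Matrix.trace_mul_cycle, hQ', one_mul]
  have htr2 : trSq (Q * p * Q.transpose) = trSq p := by
    have h2 : ∀ m : M3, trSq m = Matrix.trace (m * m) := by
      intro m; simp [trSq, Matrix.trace, Matrix.diag, Matrix.mul_apply]
    rw [h2, h2]
    have h3 : (Q * p * Q.transpose) * (Q * p * Q.transpose) = Q * (p * p) * Q.transpose := by
      simp only [Matrix.mul_assoc]
      rw [← Matrix.mul_assoc Q.transpose Q, hQ', one_mul]
    rw [h3, Matrix.trace_mul_cycle, hQ', one_mul]
  -- Lagrange identity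
  have hlag : ∀ a b : V3, normSq3 (cross3 a b) = normSq3 a * normSq3 b - (dot3 a b) ^ 2 := by
    intro a b
    simp only [normSq3, cross3, dot3, Fin.sum_univ_three, Matrix.cons_val_zero,
      Matrix.cons_val_one, Matrix.head_cons, Matrix.cons_val_two, Matrix.tail_cons]
    ring
  -- scaling lemmas
  have hdots : ∀ (a w : V3), dot3 a (fun i => Q.det * w i) = Q.det * dot3 a w := by
    intro a w; simp only [dot3, Fin.sum_univ_three]; ring
  have hnss : ∀ w : V3, normSq3 (fun i => Q.det * w i) = Q.det * Q.det * normSq3 w := by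
    intro w; simp only [normSq3, Fin.sum_univ_three]; ring
  -- key invariances
  have h3 : dot3 (Q.mulVec z) (curlv (Q * p * Q.transpose))
      = Q.det * dot3 z (curlv p) := by
    rw [hc, hdots, hdot]
  have h4 : normSq3 (cross3 (Q.mulVec z) (curlv (Q * p * Q.transpose)))
      = normSq3 (cross3 z (curlv p)) := by
    rw [hlag, hlag, hc, hdots, hdot, hnss, hd, one_mul,
      hns (Q.mulVec z), hns (Q.mulVec (curlv p)), hdot, hdot, ← hns, ← hns]
    linear_combination (-(dot3 z (curlv p) ^ 2)) * hd
  simp only [W, htr, htr2, h3, h4]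
  linear_combination (k2 * (dot3 z (curlv p)) ^ 2) * hd

end
end

section
/- There exists a constant C > 0, depending only on k1,…,k4, such that for all unit vectors z1, z2 ∈ ℝ³ and all real 3×3 matrices p1, p2 satisfying the tangency constraints Σ_i z_m^i (p_m)^i_α = 0 for every α ∈ {1,2,3} and m ∈ {1,2}, the following pointwise estimate holds with w := z1 − z2 and q := p1 − p2: |Σ_{i,k,α}(z1^k z1^i W_{p^k_α}(z1,p1) − z2^k z2^i W_{p^k_α}(z2,p2)) q^i_α| ≤ C·|p1|·|w|·|q|, where |·| denotes the Euclidean norm on vectors and the Frobenius norm on matrices. -/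
noncomputable section

open MeasureTheory Metric Filter Topology

def Wlin (k1 k2 k3 k4 : ℝ) (z : V3) (p E : M3) : ℝ :=
  2*k1*trA p*trA E + 2*k2*(dot3 z (curlv p))*(dot3 z (curlv E))
    + 2*k3*(dot3 (cross3 z (curlv p)) (cross3 z (curlv E)))
    + (k2+k4)*(2*(∑ i, ∑ j, p i j * E j i) - 2*trA p*trA E)

lemma W_expand (k1 k2 k3 k4 : ℝ) (z : V3) (p E : M3) (s : ℝ) :
    W k1 k2 k3 k4 z (p + s • E)
      = W k1 k2 k3 k4 z p + s * Wlin k1 k2 k3 k4 z p E + s ^ 2 * W k1 k2 k3 k4 z E := by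
  simp only [W, Wlin, trA, curlv, dot3, cross3, trSq, normSq3, Fin.sum_univ_three,
    Matrix.add_apply, Matrix.smul_apply, smul_eq_mul, Matrix.cons_val_zero,
    Matrix.cons_val_one, Matrix.head_cons, Matrix.cons_val_two, Matrix.tail_cons]
  ring

lemma Wp_eq (k1 k2 k3 k4 : ℝ) (z : V3) (p : M3) (i α : Fin 3) :
    Wp k1 k2 k3 k4 z p i α = Wlin k1 k2 k3 k4 z p (Matrix.single i α 1) := by
  unfold Wp
  have h : (fun s : ℝ => W k1 k2 k3 k4 z (p + s • Matrix.single i α 1))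
      = fun s : ℝ => W k1 k2 k3 k4 z p
          + s * Wlin k1 k2 k3 k4 z p (Matrix.single i α 1)
          + s ^ 2 * W k1 k2 k3 k4 z (Matrix.single i α 1) :=
    funext fun s => W_expand k1 k2 k3 k4 z p (Matrix.single i α 1) s
  rw [h]
  have hd : HasDerivAt (fun s : ℝ => W k1 k2 k3 k4 z p
        + s * Wlin k1 k2 k3 k4 z p (Matrix.single i α 1)
        + s ^ 2 * W k1 k2 k3 k4 z (Matrix.single i α 1))
      (Wlin k1 k2 k3 k4 z p (Matrix.single i α 1)) 0 := by
    have := ((hasDerivAt_const (0:ℝ) (W k1 k2 k3 k4 z p)).add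
        ((hasDerivAt_id (0:ℝ)).mul_const (Wlin k1 k2 k3 k4 z p (Matrix.single i α 1)))).add
      ((hasDerivAt_pow 2 (0:ℝ)).mul_const (W k1 k2 k3 k4 z (Matrix.single i α 1)))
    simp at this
    exact this
  exact hd.deriv

def Aform (k1 k2 k3 k4 : ℝ) (z : V3) (p : M3) (α : Fin 3) : ℝ :=
  (2*k1) * (trA p * z α) + (2*k3) * (normSq3 z * cross3 z (curlv p) α)
    + (2*(k2+k4)) * ((∑ k, p α k * z k) - trA p * z α)

set_option maxHeartbeats 2000000 in
lemma contract0 (k1 k2 k3 k4 : ℝ) (z : V3) (p : M3) :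
    ∑ k, z k * Wp k1 k2 k3 k4 z p k (0 : Fin 3) = Aform k1 k2 k3 k4 z p 0 := by
  simp only [Wp_eq, Wlin, Aform, trA, curlv, dot3, cross3, trSq, normSq3, Fin.sum_univ_three,
    Matrix.single, Matrix.of_apply, Matrix.cons_val_zero, Matrix.cons_val_one,
    Matrix.head_cons, Matrix.cons_val_two, Matrix.tail_cons, Fin.reduceEq, reduceIte,
    and_self, and_false, false_and, and_true, true_and]
  ring

set_option maxHeartbeats 2000000 in
lemma contract1 (k1 k2 k3 k4 : ℝ) (z : V3) (p : M3) :
    ∑ k, z k * Wp k1 k2 k3 k4 z p k (1 : Fin 3) = Aform k1 k2 k3 k4 z p 1 := by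
  simp only [Wp_eq, Wlin, Aform, trA, curlv, dot3, cross3, trSq, normSq3, Fin.sum_univ_three,
    Matrix.single, Matrix.of_apply, Matrix.cons_val_zero, Matrix.cons_val_one,
    Matrix.head_cons, Matrix.cons_val_two, Matrix.tail_cons, Fin.reduceEq, reduceIte,
    and_self, and_false, false_and, and_true, true_and]
  ring

set_option maxHeartbeats 2000000 in
lemma contract2 (k1 k2 k3 k4 : ℝ) (z : V3) (p : M3) :
    ∑ k, z k * Wp k1 k2 k3 k4 z p k (2 : Fin 3) = Aform k1 k2 k3 k4 z p 2 := by
  simp only [Wp_eq, Wlin, Aform, trA, curlv, dot3, cross3, trSq, normSq3, Fin.sum_univ_three,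
    Matrix.single, Matrix.of_apply, Matrix.cons_val_zero, Matrix.cons_val_one,
    Matrix.head_cons, Matrix.cons_val_two, Matrix.tail_cons, Fin.reduceEq, reduceIte,
    and_self, and_false, false_and, and_true, true_and]
  ring

lemma Aform_sub (k1 k2 k3 k4 : ℝ) (z : V3) (p1 p2 : M3) (α : Fin 3) :
    Aform k1 k2 k3 k4 z (p1 - p2) α = Aform k1 k2 k3 k4 z p1 α - Aform k1 k2 k3 k4 z p2 α := by
  fin_cases α <;>
  · simp [Aform, trA, curlv, cross3, normSq3, Fin.sum_univ_three, Matrix.sub_apply]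
    ring

lemma entry_le_frobN (p : M3) (a b : Fin 3) : |p a b| ≤ frobN p := by
  have h1 : (p a b) ^ 2 ≤ frobSq p := by
    have h2 : (p a b) ^ 2 ≤ ∑ j, (p a j) ^ 2 :=
      Finset.single_le_sum (fun j _ => sq_nonneg (p a j)) (Finset.mem_univ b)
    refine h2.trans ?_
    exact Finset.single_le_sum
      (fun i _ => Finset.sum_nonneg fun j _ => sq_nonneg (p i j)) (Finset.mem_univ a)
  calc |p a b| = Real.sqrt ((p a b) ^ 2) := (Real.sqrt_sq_eq_abs _).symm
    _ ≤ frobN p := Real.sqrt_le_sqrt h1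

lemma entry_le_eN (a : V3) (i : Fin 3) : |a i| ≤ eN a := by
  have h1 : (a i) ^ 2 ≤ normSq3 a :=
    Finset.single_le_sum (fun j _ => sq_nonneg (a j)) (Finset.mem_univ i)
  calc |a i| = Real.sqrt ((a i) ^ 2) := (Real.sqrt_sq_eq_abs _).symm
    _ ≤ eN a := Real.sqrt_le_sqrt h1

lemma frobN_nonneg (p : M3) : 0 ≤ frobN p := Real.sqrt_nonneg _
lemma eN_nonneg (a : V3) : 0 ≤ eN a := Real.sqrt_nonneg _

lemma trA_bound (p : M3) (F : ℝ) (hp : ∀ a b, |p a b| ≤ F) : |trA p| ≤ 3 * F := by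
  have := abs_add_three (p 0 0) (p 1 1) (p 2 2)
  have h1 := hp 0 0; have h2 := hp 1 1; have h3 := hp 2 2
  simp only [trA, Fin.sum_univ_three]
  linarith

lemma curlv_bound (p : M3) (F : ℝ) (hp : ∀ a b, |p a b| ≤ F) (i : Fin 3) :
    |curlv p i| ≤ 2 * F := by
  fin_cases i <;>
  · simp only [curlv, Matrix.cons_val_zero, Matrix.cons_val_one, Matrix.head_cons,
      Matrix.cons_val_two, Matrix.tail_cons]
    refine (abs_sub _ _).trans ?_
    have := hp 2 1; have := hp 1 2; have := hp 0 2; have := hp 2 0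
    have := hp 1 0; have := hp 0 1
    linarith

lemma mul_abs_bd {a b M N : ℝ} (ha : |a| ≤ M) (hb : |b| ≤ N) : |a * b| ≤ M * N := by
  rw [abs_mul]
  exact mul_le_mul ha hb (abs_nonneg b) ((abs_nonneg a).trans ha)

/-- core bound for the Aform-shaped expression -/
lemma core_bound (k1 k2 k3 k4 : ℝ) (d : V3) (p : M3) (α : Fin 3) (M F : ℝ)
    (hd : ∀ i, |d i| ≤ M) (hp : ∀ a b, |p a b| ≤ F) (hM : 0 ≤ M) (hF : 0 ≤ F) :
    |(2*k1) * (trA p * d α) + (2*k3) * (cross3 d (curlv p) α)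
        + (2*(k2+k4)) * ((∑ k, p α k * d k) - trA p * d α)|
      ≤ (12*(|k1|+|k2|+|k3|+|k4|)+1) * M * F := by
  have ht := trA_bound p F hp
  have hc := curlv_bound p F hp
  have hX1 : |trA p * d α| ≤ 3 * F * M := by
    calc |trA p * d α| ≤ (3*F) * M := mul_abs_bd ht (hd α)
      _ = 3 * F * M := by ring
  have hX2 : |cross3 d (curlv p) α| ≤ 4 * (M * F) := by
    fin_cases α <;>
    · simp only [cross3, Matrix.cons_val_zero, Matrix.cons_val_one, Matrix.head_cons,
        Matrix.cons_val_two, Matrix.tail_cons]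
      refine (abs_sub _ _).trans ?_
      have b1 := mul_abs_bd (hd 0) (hc 0); have b2 := mul_abs_bd (hd 0) (hc 1)
      have b3 := mul_abs_bd (hd 0) (hc 2); have b4 := mul_abs_bd (hd 1) (hc 0)
      have b5 := mul_abs_bd (hd 1) (hc 1); have b6 := mul_abs_bd (hd 1) (hc 2)
      have b7 := mul_abs_bd (hd 2) (hc 0); have b8 := mul_abs_bd (hd 2) (hc 1)
      have b9 := mul_abs_bd (hd 2) (hc 2)
      linarith
  have hX3 : |(∑ k, p α k * d k) - trA p * d α| ≤ 6 * (F * M) := by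
    refine (abs_sub _ _).trans ?_
    have hs : |∑ k, p α k * d k| ≤ 3 * (F * M) := by
      simp only [Fin.sum_univ_three]
      have := abs_add_three (p α 0 * d 0) (p α 1 * d 1) (p α 2 * d 2)
      have b1 := mul_abs_bd (hp α 0) (hd 0); have b2 := mul_abs_bd (hp α 1) (hd 1)
      have b3 := mul_abs_bd (hp α 2) (hd 2)
      linarith
    linarith
  have habs := abs_add_three ((2*k1) * (trA p * d α)) ((2*k3) * (cross3 d (curlv p) α))
    ((2*(k2+k4)) * ((∑ k, p α k * d k) - trA p * d α))
  have e1 : |(2*k1) * (trA p * d α)| ≤ |k1| * (6 * (M * F)) := by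
    rw [abs_mul]
    have : |trA p * d α| ≤ 3 * (M * F) := by linarith [hX1]
    calc |2*k1| * |trA p * d α| ≤ (2*|k1|) * (3*(M*F)) := by
          refine mul_le_mul (by rw [abs_mul]; simp) this (abs_nonneg _) (by positivity)
      _ = |k1| * (6 * (M * F)) := by ring
  have e2 : |(2*k3) * (cross3 d (curlv p) α)| ≤ |k3| * (8 * (M * F)) := by
    rw [abs_mul]
    calc |2*k3| * |cross3 d (curlv p) α| ≤ (2*|k3|) * (4*(M*F)) := by
          refine mul_le_mul (by rw [abs_mul]; simp) hX2 (abs_nonneg _) (by positivity)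
      _ = |k3| * (8 * (M * F)) := by ring
  have e3 : |(2*(k2+k4)) * ((∑ k, p α k * d k) - trA p * d α)|
      ≤ (|k2|+|k4|) * (12 * (M * F)) := by
    rw [abs_mul]
    have h24 : |2*(k2+k4)| ≤ 2*(|k2|+|k4|) := by
      rw [abs_mul]
      have := abs_add_le k2 k4
      simp only [Nat.abs_ofNat]
      nlinarith [abs_nonneg (k2+k4)]
    have : |(∑ k, p α k * d k) - trA p * d α| ≤ 6 * (M * F) := by linarith [hX3]
    calc |2*(k2+k4)| * |(∑ k, p α k * d k) - trA p * d α|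
        ≤ (2*(|k2|+|k4|)) * (6*(M*F)) :=
          mul_le_mul h24 this (abs_nonneg _) (by positivity)
      _ = (|k2|+|k4|) * (12 * (M * F)) := by ring
  have hMF : 0 ≤ M * F := mul_nonneg hM hF
  nlinarith [habs, e1, e2, e3, mul_nonneg (abs_nonneg k1) hMF, mul_nonneg (abs_nonneg k2) hMF,
    mul_nonneg (abs_nonneg k3) hMF, mul_nonneg (abs_nonneg k4) hMF, hMF]

lemma Aform_unit_bound (k1 k2 k3 k4 : ℝ) (z : V3) (p : M3) (α : Fin 3) (F : ℝ)
    (hS : normSq3 z = 1) (hp : ∀ a b, |p a b| ≤ F) (hF : 0 ≤ F) :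
    |Aform k1 k2 k3 k4 z p α| ≤ (12*(|k1|+|k2|+|k3|+|k4|)+1) * F := by
  have heN : eN z = 1 := by simp [eN, hS]
  have hd : ∀ i, |z i| ≤ 1 := fun i => (entry_le_eN z i).trans_eq heN
  have key := core_bound k1 k2 k3 k4 z p α 1 F hd hp zero_le_one hF
  have hrw : Aform k1 k2 k3 k4 z p α
      = (2*k1) * (trA p * z α) + (2*k3) * (cross3 z (curlv p) α)
        + (2*(k2+k4)) * ((∑ k, p α k * z k) - trA p * z α) := by
    simp only [Aform, hS, one_mul]
  rw [hrw]
  calc _ ≤ (12*(|k1|+|k2|+|k3|+|k4|)+1) * 1 * F := key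
    _ = (12*(|k1|+|k2|+|k3|+|k4|)+1) * F := by ring

lemma Aform_diff_bound (k1 k2 k3 k4 : ℝ) (z1 z2 : V3) (p : M3) (α : Fin 3) (M F : ℝ)
    (hS1 : normSq3 z1 = 1) (hS2 : normSq3 z2 = 1)
    (hd : ∀ i, |z2 i - z1 i| ≤ M) (hp : ∀ a b, |p a b| ≤ F) (hM : 0 ≤ M) (hF : 0 ≤ F) :
    |Aform k1 k2 k3 k4 z2 p α - Aform k1 k2 k3 k4 z1 p α|
      ≤ (12*(|k1|+|k2|+|k3|+|k4|)+1) * M * F := by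
  have key := core_bound k1 k2 k3 k4 (fun i => z2 i - z1 i) p α M F hd hp hM hF
  have hrw : Aform k1 k2 k3 k4 z2 p α - Aform k1 k2 k3 k4 z1 p α
      = (2*k1) * (trA p * (fun i => z2 i - z1 i) α)
        + (2*k3) * (cross3 (fun i => z2 i - z1 i) (curlv p) α)
        + (2*(k2+k4)) * ((∑ k, p α k * (fun i => z2 i - z1 i) k)
            - trA p * (fun i => z2 i - z1 i) α) := by
    simp only [Aform, hS1, hS2, one_mul]
    fin_cases α <;> (simp [cross3, trA, curlv, Fin.sum_univ_three]; ring)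
  rw [hrw]; exact key


set_option maxHeartbeats 2000000 in
/-- pointwise estimate for the difference of projection terms
(estimate (5.22)). -/
theorem projection_term_difference_estimate (k1 k2 k3 k4 : ℝ) :
    ∃ C : ℝ, 0 < C ∧
      ∀ (z1 z2 : V3) (p1 p2 : M3),
        normSq3 z1 = 1 → normSq3 z2 = 1 →
        (∀ α : Fin 3, ∑ i, z1 i * p1 i α = 0) →
        (∀ α : Fin 3, ∑ i, z2 i * p2 i α = 0) →
        |∑ i, ∑ k, ∑ α,
            (z1 k * z1 i * Wp k1 k2 k3 k4 z1 p1 k α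
              - z2 k * z2 i * Wp k1 k2 k3 k4 z2 p2 k α) * (p1 i α - p2 i α)|
          ≤ C * frobN p1 * eN (z1 - z2) * frobN (p1 - p2) := by
  refine ⟨27 * (12*(|k1|+|k2|+|k3|+|k4|)+1), by positivity, ?_⟩
  intro z1 z2 p1 p2 hS1 hS2 h1 h2
  set K : ℝ := 12*(|k1|+|k2|+|k3|+|k4|)+1 with hK
  have hKpos : 0 < K := by positivity
  set F1 : ℝ := frobN p1 with hF1def
  set Fq : ℝ := frobN (p1 - p2) with hFqdef
  set Ew : ℝ := eN (z1 - z2) with hEwdef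
  have hF1 : 0 ≤ F1 := frobN_nonneg p1
  have hFq : 0 ≤ Fq := frobN_nonneg (p1 - p2)
  have hEw : 0 ≤ Ew := eN_nonneg (z1 - z2)
  have hp1 : ∀ a b, |p1 a b| ≤ F1 := fun a b => entry_le_frobN p1 a b
  have hqm : ∀ a b, |(p1 - p2) a b| ≤ Fq := fun a b => entry_le_frobN (p1 - p2) a b
  have hq : ∀ a b, |p1 a b - p2 a b| ≤ Fq := fun a b => by
    simpa [Matrix.sub_apply] using hqm a b
  have hw : ∀ i, |z1 i - z2 i| ≤ Ew := fun i => by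
    simpa [Pi.sub_apply] using entry_le_eN (z1 - z2) i
  have heN2 : eN z2 = 1 := by simp [eN, hS2]
  have hz2e : ∀ i, |z2 i| ≤ 1 := fun i => (entry_le_eN z2 i).trans_eq heN2
  -- expanded tangency
  have h1e : ∀ α : Fin 3, z1 0 * p1 0 α + z1 1 * p1 1 α + z1 2 * p1 2 α = 0 := fun α => by
    simpa [Fin.sum_univ_three] using h1 α
  have h2e : ∀ α : Fin 3, z2 0 * p2 0 α + z2 1 * p2 1 α + z2 2 * p2 2 α = 0 := fun α => by
    simpa [Fin.sum_univ_three] using h2 α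
  -- contraction identities
  have hc10 := contract0 k1 k2 k3 k4 z1 p1
  have hc11 := contract1 k1 k2 k3 k4 z1 p1
  have hc12 := contract2 k1 k2 k3 k4 z1 p1
  have hc20 := contract0 k1 k2 k3 k4 z2 p2
  have hc21 := contract1 k1 k2 k3 k4 z2 p2
  have hc22 := contract2 k1 k2 k3 k4 z2 p2
  have hsub := fun α => Aform_sub k1 k2 k3 k4 z2 p1 p2 α
  -- the key algebraic identity
  have key : (∑ i, ∑ k, ∑ α,
        (z1 k * z1 i * Wp k1 k2 k3 k4 z1 p1 k α
          - z2 k * z2 i * Wp k1 k2 k3 k4 z2 p2 k α) * (p1 i α - p2 i α))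
      = -(∑ α, Aform k1 k2 k3 k4 z2 (p1 - p2) α * (∑ i, (z1 i - z2 i) * p1 i α))
        + (∑ α, (Aform k1 k2 k3 k4 z2 p1 α - Aform k1 k2 k3 k4 z1 p1 α)
            * (∑ i, (z1 i - z2 i) * p1 i α))
        + (∑ α, Aform k1 k2 k3 k4 z1 p1 α * (∑ i, (z1 i - z2 i) * (p1 i α - p2 i α))) := by
    simp only [Fin.sum_univ_three] at hc10 hc11 hc12 hc20 hc21 hc22 ⊢
    linear_combination
      (z1 0 * (p1 0 0 - p2 0 0) + z1 1 * (p1 1 0 - p2 1 0) + z1 2 * (p1 2 0 - p2 2 0)) * hc10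
      + (z1 0 * (p1 0 1 - p2 0 1) + z1 1 * (p1 1 1 - p2 1 1) + z1 2 * (p1 2 1 - p2 2 1)) * hc11
      + (z1 0 * (p1 0 2 - p2 0 2) + z1 1 * (p1 1 2 - p2 1 2) + z1 2 * (p1 2 2 - p2 2 2)) * hc12
      - (z2 0 * (p1 0 0 - p2 0 0) + z2 1 * (p1 1 0 - p2 1 0) + z2 2 * (p1 2 0 - p2 2 0)) * hc20
      - (z2 0 * (p1 0 1 - p2 0 1) + z2 1 * (p1 1 1 - p2 1 1) + z2 2 * (p1 2 1 - p2 2 1)) * hc21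
      - (z2 0 * (p1 0 2 - p2 0 2) + z2 1 * (p1 1 2 - p2 1 2) + z2 2 * (p1 2 2 - p2 2 2)) * hc22
      + (Aform k1 k2 k3 k4 z1 p1 0 - Aform k1 k2 k3 k4 z2 p2 0) * (h1e 0)
      + (Aform k1 k2 k3 k4 z1 p1 1 - Aform k1 k2 k3 k4 z2 p2 1) * (h1e 1)
      + (Aform k1 k2 k3 k4 z1 p1 2 - Aform k1 k2 k3 k4 z2 p2 2) * (h1e 2)
      - (Aform k1 k2 k3 k4 z1 p1 0 - Aform k1 k2 k3 k4 z2 p2 0) * (h2e 0)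
      - (Aform k1 k2 k3 k4 z1 p1 1 - Aform k1 k2 k3 k4 z2 p2 1) * (h2e 1)
      - (Aform k1 k2 k3 k4 z1 p1 2 - Aform k1 k2 k3 k4 z2 p2 2) * (h2e 2)
      + ((z1 0 - z2 0) * p1 0 0 + (z1 1 - z2 1) * p1 1 0 + (z1 2 - z2 2) * p1 2 0) * (hsub 0)
      + ((z1 0 - z2 0) * p1 0 1 + (z1 1 - z2 1) * p1 1 1 + (z1 2 - z2 2) * p1 2 1) * (hsub 1)
      + ((z1 0 - z2 0) * p1 0 2 + (z1 1 - z2 1) * p1 1 2 + (z1 2 - z2 2) * p1 2 2) * (hsub 2)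
  -- bounds on the factors
  have bAQ : ∀ α, |Aform k1 k2 k3 k4 z2 (p1 - p2) α| ≤ K * Fq := fun α =>
    Aform_unit_bound k1 k2 k3 k4 z2 (p1 - p2) α Fq hS2 hqm hFq
  have bA1 : ∀ α, |Aform k1 k2 k3 k4 z1 p1 α| ≤ K * F1 := fun α =>
    Aform_unit_bound k1 k2 k3 k4 z1 p1 α F1 hS1 hp1 hF1
  have bA21 : ∀ α, |Aform k1 k2 k3 k4 z2 p1 α - Aform k1 k2 k3 k4 z1 p1 α| ≤ K * Ew * F1 :=
    fun α => Aform_diff_bound k1 k2 k3 k4 z1 z2 p1 α Ew F1 hS1 hS2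
      (fun i => by rw [abs_sub_comm]; exact hw i) hp1 hEw hF1
  have bwp1 : ∀ α, |∑ i, (z1 i - z2 i) * p1 i α| ≤ 3 * (Ew * F1) := by
    intro α
    simp only [Fin.sum_univ_three]
    have := abs_add_three ((z1 0 - z2 0) * p1 0 α) ((z1 1 - z2 1) * p1 1 α)
      ((z1 2 - z2 2) * p1 2 α)
    have b1 := mul_abs_bd (hw 0) (hp1 0 α)
    have b2 := mul_abs_bd (hw 1) (hp1 1 α)
    have b3 := mul_abs_bd (hw 2) (hp1 2 α)
    linarith
  have bwp1' : ∀ α, |∑ i, (z1 i - z2 i) * p1 i α| ≤ 3 * Fq := by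
    intro α
    have hid : (∑ i, (z1 i - z2 i) * p1 i α)
        = -(z2 0 * (p1 0 α - p2 0 α) + z2 1 * (p1 1 α - p2 1 α) + z2 2 * (p1 2 α - p2 2 α)) := by
      simp only [Fin.sum_univ_three]
      linear_combination h1e α - h2e α
    rw [hid, abs_neg]
    have := abs_add_three (z2 0 * (p1 0 α - p2 0 α)) (z2 1 * (p1 1 α - p2 1 α))
      (z2 2 * (p1 2 α - p2 2 α))
    have b1 := mul_abs_bd (hz2e 0) (hq 0 α)
    have b2 := mul_abs_bd (hz2e 1) (hq 1 α)
    have b3 := mul_abs_bd (hz2e 2) (hq 2 α)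
    have : (1:ℝ) * Fq = Fq := one_mul Fq
    linarith
  have bwq : ∀ α, |∑ i, (z1 i - z2 i) * (p1 i α - p2 i α)| ≤ 3 * (Ew * Fq) := by
    intro α
    simp only [Fin.sum_univ_three]
    have := abs_add_three ((z1 0 - z2 0) * (p1 0 α - p2 0 α))
      ((z1 1 - z2 1) * (p1 1 α - p2 1 α)) ((z1 2 - z2 2) * (p1 2 α - p2 2 α))
    have b1 := mul_abs_bd (hw 0) (hq 0 α)
    have b2 := mul_abs_bd (hw 1) (hq 1 α)
    have b3 := mul_abs_bd (hw 2) (hq 2 α)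
    linarith
  -- assemble
  rw [key]
  have tb1 : |∑ α, Aform k1 k2 k3 k4 z2 (p1 - p2) α * (∑ i, (z1 i - z2 i) * p1 i α)|
      ≤ 3 * ((K * Fq) * (3 * (Ew * F1))) := by
    simp only [Fin.sum_univ_three]
    have := abs_add_three
      (Aform k1 k2 k3 k4 z2 (p1 - p2) 0 * (∑ i, (z1 i - z2 i) * p1 i 0))
      (Aform k1 k2 k3 k4 z2 (p1 - p2) 1 * (∑ i, (z1 i - z2 i) * p1 i 1))
      (Aform k1 k2 k3 k4 z2 (p1 - p2) 2 * (∑ i, (z1 i - z2 i) * p1 i 2))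
    simp only [Fin.sum_univ_three] at this
    have b1 := mul_abs_bd (bAQ 0) (bwp1 0)
    have b2 := mul_abs_bd (bAQ 1) (bwp1 1)
    have b3 := mul_abs_bd (bAQ 2) (bwp1 2)
    simp only [Fin.sum_univ_three] at b1 b2 b3
    linarith
  have tb2 : |∑ α, (Aform k1 k2 k3 k4 z2 p1 α - Aform k1 k2 k3 k4 z1 p1 α)
        * (∑ i, (z1 i - z2 i) * p1 i α)|
      ≤ 3 * ((K * Ew * F1) * (3 * Fq)) := by
    simp only [Fin.sum_univ_three]
    have := abs_add_three
      ((Aform k1 k2 k3 k4 z2 p1 0 - Aform k1 k2 k3 k4 z1 p1 0) * (∑ i, (z1 i - z2 i) * p1 i 0))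
      ((Aform k1 k2 k3 k4 z2 p1 1 - Aform k1 k2 k3 k4 z1 p1 1) * (∑ i, (z1 i - z2 i) * p1 i 1))
      ((Aform k1 k2 k3 k4 z2 p1 2 - Aform k1 k2 k3 k4 z1 p1 2) * (∑ i, (z1 i - z2 i) * p1 i 2))
    simp only [Fin.sum_univ_three] at this
    have b1 := mul_abs_bd (bA21 0) (bwp1' 0)
    have b2 := mul_abs_bd (bA21 1) (bwp1' 1)
    have b3 := mul_abs_bd (bA21 2) (bwp1' 2)
    simp only [Fin.sum_univ_three] at b1 b2 b3
    linarith
  have tb3 : |∑ α, Aform k1 k2 k3 k4 z1 p1 α * (∑ i, (z1 i - z2 i) * (p1 i α - p2 i α))|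
      ≤ 3 * ((K * F1) * (3 * (Ew * Fq))) := by
    simp only [Fin.sum_univ_three]
    have := abs_add_three
      (Aform k1 k2 k3 k4 z1 p1 0 * (∑ i, (z1 i - z2 i) * (p1 i 0 - p2 i 0)))
      (Aform k1 k2 k3 k4 z1 p1 1 * (∑ i, (z1 i - z2 i) * (p1 i 1 - p2 i 1)))
      (Aform k1 k2 k3 k4 z1 p1 2 * (∑ i, (z1 i - z2 i) * (p1 i 2 - p2 i 2)))
    simp only [Fin.sum_univ_three] at this
    have b1 := mul_abs_bd (bA1 0) (bwq 0)
    have b2 := mul_abs_bd (bA1 1) (bwq 1)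
    have b3 := mul_abs_bd (bA1 2) (bwq 2)
    simp only [Fin.sum_univ_three] at b1 b2 b3
    linarith
  have habs := abs_add_three
    (-(∑ α, Aform k1 k2 k3 k4 z2 (p1 - p2) α * (∑ i, (z1 i - z2 i) * p1 i α)))
    (∑ α, (Aform k1 k2 k3 k4 z2 p1 α - Aform k1 k2 k3 k4 z1 p1 α)
        * (∑ i, (z1 i - z2 i) * p1 i α))
    (∑ α, Aform k1 k2 k3 k4 z1 p1 α * (∑ i, (z1 i - z2 i) * (p1 i α - p2 i α)))
  rw [abs_neg] at habs
  have hfinal : 3 * ((K * Fq) * (3 * (Ew * F1))) + 3 * ((K * Ew * F1) * (3 * Fq))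
      + 3 * ((K * F1) * (3 * (Ew * Fq))) = 27 * K * F1 * Ew * Fq := by ring
  calc |(-(∑ α, Aform k1 k2 k3 k4 z2 (p1 - p2) α * (∑ i, (z1 i - z2 i) * p1 i α)))
        + (∑ α, (Aform k1 k2 k3 k4 z2 p1 α - Aform k1 k2 k3 k4 z1 p1 α)
            * (∑ i, (z1 i - z2 i) * p1 i α))
        + (∑ α, Aform k1 k2 k3 k4 z1 p1 α * (∑ i, (z1 i - z2 i) * (p1 i α - p2 i α)))|
      ≤ 27 * K * F1 * Ew * Fq := by linarith
    _ = 27 * K * F1 * Ew * Fq := rfl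


end
end
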